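/- Let μ_1,…,μ_k be probability measures on ℝ with finite second moments, π_1,…,π_k > 0 with Σ_s π_s = 1, b(z) := Σ_{s=1}^k π_s z_s for z ∈ ℝ^k, and let Γ(μ_1,…,μ_k) be the set of probability measures on ℝ^k whose s-th marginal is μ_s for every s. Let γ* be the pushforward of Unif(0,1) under u ↦ (F_{μ_1}⁻¹(u),…,F_{μ_k}⁻¹(u)). Then: (i) γ* ∈ Γ(μ_1,…,μ_k); (ii) γ* minimizes γ ↦ Σ_{s=1}^k π_s ∫_{ℝ^k} |z_s − b(z)|² dγ(z) over Γ(μ_1,…,μ_k); (iii) the pushforward b_#γ* equals ν̄, the pushforward of Unif(0,1) under u ↦ Σ_s π_s F_{μ_s}⁻¹(u); and (iv) the minimal multimarginal value equals inf_ν Σ_{s=1}^k π_s W₂²(μ_s, ν), the infimum being over probability measures ν on ℝ with finite second moment. (The multimarginal formulation, equations (9)–(10) of Section 4.) -/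

import Mathlib

/-!
For `γ` with marginals `μ_s`, expanding the square gives
`Σ_s π_s ∫ |z_s − b(z)|² dγ = Σ_s π_s ∫ x² dμ_s − Σ_{s,t} π_s π_t ∫ z_s z_t dγ`, so minimizing the
multimarginal cost means maximizing each cross moment `∫ z_s z_t dγ`, which only depends on the
`(s, t)` marginal of `γ`. Hoeffding's identity `xy = ∫∫ (1{s<x} − 1{s<0})(1{t<y} − 1{t<0}) ds dt`
writes that moment, up to terms fixed by the one-dimensional marginals, as `∫∫ γ(X > s, Y > t)`,
and the comonotone coupling `u ↦ (F⁻¹(u), G⁻¹(u))` attains the Fréchet bound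
`γ(X > s, Y > t) ≤ min(P(X > s), Q(Y > t))` on every quadrant. The same inequality gives
`W₂²(P, Q) = ∫₀¹ |F_P⁻¹ − F_Q⁻¹|²`. Finally, for each `u` the weighted mean `Σ_s π_s F_{μ_s}⁻¹(u)`
minimizes `y ↦ Σ_s π_s |F_{μ_s}⁻¹(u) − y|²`, so `ν̄` solves the barycenter problem and its value
is the multimarginal cost of `γ*`.
-/

open MeasureTheory ProbabilityTheory

/-- Squared 2-Wasserstein distance between measures on ℝ: infimum of ∫|x−y|² dγ over
couplings γ of P and Q. -/
noncomputable def W2sq (P Q : Measure ℝ) : ℝ :=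
  sInf { c : ℝ | ∃ γ : Measure (ℝ × ℝ),
    γ.map Prod.fst = P ∧ γ.map Prod.snd = Q ∧ c = ∫ z, (z.1 - z.2) ^ 2 ∂γ }

/-- CDF of a measure on ℝ. -/
noncomputable def cdf' (μ : Measure ℝ) (x : ℝ) : ℝ := (μ (Set.Iic x)).toReal

/-- Quantile function of a measure on ℝ: `F_μ⁻¹(u) = inf {x : F_μ(x) ≥ u}`. -/
noncomputable def quantile' (μ : Measure ℝ) (u : ℝ) : ℝ := sInf { x : ℝ | u ≤ cdf' μ x }

/-- Uniform distribution on (0,1): Lebesgue measure restricted to (0,1). -/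
noncomputable def unif01 : Measure ℝ := volume.restrict (Set.Ioo 0 1)

open Set Filter Topology

section PushForward

variable {α : Type*} [MeasurableSpace α] {ρ : Measure α}

lemma memLp_of_map_eq {f : α → ℝ} {ν : Measure ℝ} {p : ENNReal} (hf : AEMeasurable f ρ)
    (h : ρ.map f = ν) (hν : MemLp id p ν) : MemLp f p ρ :=
  (h ▸ hν).comp_of_map hf

lemma integral_sq_of_map_eq {f : α → ℝ} {ν : Measure ℝ} (hf : AEMeasurable f ρ)
    (h : ρ.map f = ν) : ∫ x, f x ^ 2 ∂ρ = ∫ y, y ^ 2 ∂ν := by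
  rw [← h, integral_map hf (continuous_pow 2).aestronglyMeasurable]

lemma isProbabilityMeasure_of_map_eq {β : Type*} [MeasurableSpace β] {f : α → β}
    {ν : Measure β} [IsProbabilityMeasure ν] (h : ρ.map f = ν) : IsProbabilityMeasure ρ :=
  have : IsProbabilityMeasure (ρ.map f) := h ▸ inferInstance
  Measure.isProbabilityMeasure_of_map f

end PushForward

lemma unif01_congr {s t : Set ℝ} (h : s ∩ Ioo 0 1 = t ∩ Ioo 0 1) : unif01 s = unif01 t := by
  rw [unif01, Measure.restrict_apply' measurableSet_Ioo, Measure.restrict_apply' measurableSet_Ioo,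
    h]

instance : IsProbabilityMeasure unif01 := ⟨by simp [unif01, Real.volume_Ioo]⟩

lemma unif01_Iic {c : ℝ} (hc : c ≤ 1) : unif01 (Iic c) = ENNReal.ofReal c := by
  rw [unif01, Measure.restrict_congr_set Ioo_ae_eq_Ioc, Measure.restrict_apply measurableSet_Iic,
    Iic_inter_Ioc_of_le hc, Real.volume_Ioc, sub_zero]

section Quantile

variable (μ : Measure ℝ)

lemma nonempty_setOf_le_cdf {u : ℝ} (hu : u < 1) : {x | u ≤ cdf μ x}.Nonempty :=
  ((tendsto_cdf_atTop μ).eventually_const_le hu).exists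

lemma bddBelow_setOf_le_cdf {u : ℝ} (hu : 0 < u) : BddBelow {x | u ≤ cdf μ x} := by
  obtain ⟨y, hy⟩ := ((tendsto_cdf_atBot μ).eventually_lt_const hu).exists
  refine ⟨y, fun x hx => ?_⟩
  by_contra! hxy
  exact (hy.trans_le hx).not_ge (monotone_cdf μ hxy.le)

variable [IsProbabilityMeasure μ]

lemma cdf'_eq_cdf : cdf' μ = cdf μ := funext fun x => (cdf_eq_real μ x).symm

lemma quantile'_le_iff {u : ℝ} (hu : u ∈ Ioo 0 1) (x : ℝ) :
    quantile' μ u ≤ x ↔ u ≤ cdf' μ x := by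
  rw [quantile', cdf'_eq_cdf]
  refine ⟨fun h => ?_, fun h => csInf_le (bddBelow_setOf_le_cdf μ hu.1) h⟩
  have hF : Tendsto (cdf μ) (𝓝[>] x) (𝓝 (cdf μ x)) :=
    ((cdf μ).right_continuous x).mono Ioi_subset_Ici_self
  refine ge_of_tendsto hF (eventually_nhdsWithin_of_forall fun y hy => ?_)
  obtain ⟨z, hz, hzy⟩ := exists_lt_of_csInf_lt (nonempty_setOf_le_cdf μ hu.2) (h.trans_lt hy)
  exact hz.trans (monotone_cdf μ hzy.le)

lemma lt_quantile'_iff {u : ℝ} (hu : u ∈ Ioo 0 1) (x : ℝ) :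
    x < quantile' μ u ↔ cdf' μ x < u := by
  simpa only [not_le] using (quantile'_le_iff μ hu x).not

lemma monotoneOn_quantile' : MonotoneOn (quantile' μ) (Ioo 0 1) := fun _ hu _ hv huv => by
  rw [quantile', quantile', cdf'_eq_cdf]
  exact csInf_le_csInf (bddBelow_setOf_le_cdf μ hu.1) (nonempty_setOf_le_cdf μ hv.2)
    fun _ hx => huv.trans hx

lemma aemeasurable_quantile' : AEMeasurable (quantile' μ) unif01 :=
  aemeasurable_restrict_of_monotoneOn measurableSet_Ioo (monotoneOn_quantile' μ)

lemma unif01_map_quantile' : unif01.map (quantile' μ) = μ := by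
  have := Measure.isProbabilityMeasure_map (aemeasurable_quantile' μ)
  refine Measure.ext_of_Iic _ _ fun x => ?_
  have hcdf : cdf' μ x ≤ 1 := by rw [cdf'_eq_cdf]; exact cdf_le_one μ x
  rw [Measure.map_apply_of_aemeasurable (aemeasurable_quantile' μ) measurableSet_Iic,
    unif01_congr (t := Iic (cdf' μ x)), unif01_Iic hcdf, cdf'_eq_cdf, ofReal_cdf]
  ext u
  exact and_congr_left (quantile'_le_iff μ · x)

lemma unif01_preimage_quantile'_Ioi (x : ℝ) :
    unif01 (quantile' μ ⁻¹' Ioi x) = unif01 (Ioi (cdf' μ x)) := by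
  refine unif01_congr ?_
  ext u
  exact and_congr_left (lt_quantile'_iff μ · x)

lemma memLp_quantile' (h : MemLp id 2 μ) : MemLp (quantile' μ) 2 unif01 :=
  memLp_of_map_eq (aemeasurable_quantile' μ) (unif01_map_quantile' μ) h

end Quantile

lemma measure_prod_le_min {γ : Measure (ℝ × ℝ)} {P Q : Measure ℝ} (h₁ : γ.map Prod.fst = P)
    (h₂ : γ.map Prod.snd = Q) {A B : Set ℝ} (hA : MeasurableSet A) (hB : MeasurableSet B) :
    γ (A ×ˢ B) ≤ min (P A) (Q B) := by
  rw [← h₁, ← h₂, Measure.map_apply measurable_fst hA, Measure.map_apply measurable_snd hB]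
  exact le_min (measure_mono (prod_subset_preimage_fst A B))
    (measure_mono (prod_subset_preimage_snd A B))

/-- The comonotone coupling of `P` and `Q`. -/
noncomputable def quantileCoupling (P Q : Measure ℝ) : Measure (ℝ × ℝ) :=
  unif01.map fun u => (quantile' P u, quantile' Q u)

section QuantileCoupling

variable (P Q : Measure ℝ) [IsProbabilityMeasure P] [IsProbabilityMeasure Q]

lemma aemeasurable_quantile'_prod :
    AEMeasurable (fun u => (quantile' P u, quantile' Q u)) unif01 :=
  (aemeasurable_quantile' P).prodMk (aemeasurable_quantile' Q)

lemma map_fst_quantileCoupling : (quantileCoupling P Q).map Prod.fst = P := by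
  rw [quantileCoupling, AEMeasurable.map_map_of_aemeasurable measurable_fst.aemeasurable
    (aemeasurable_quantile'_prod P Q)]
  exact unif01_map_quantile' P

lemma map_snd_quantileCoupling : (quantileCoupling P Q).map Prod.snd = Q := by
  rw [quantileCoupling, AEMeasurable.map_map_of_aemeasurable measurable_snd.aemeasurable
    (aemeasurable_quantile'_prod P Q)]
  exact unif01_map_quantile' Q

instance : IsProbabilityMeasure (quantileCoupling P Q) :=
  Measure.isProbabilityMeasure_map (aemeasurable_quantile'_prod P Q)

/-- The comonotone coupling attains the Fréchet upper bound `measure_prod_le_min` on quadrants. -/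
lemma quantileCoupling_Ioi_prod_Ioi (s t : ℝ) :
    quantileCoupling P Q (Ioi s ×ˢ Ioi t) = min (P (Ioi s)) (Q (Ioi t)) := by
  have hanti : Antitone fun c => unif01 (Ioi c) := fun _ _ h => measure_mono (Ioi_subset_Ioi h)
  rw [quantileCoupling, Measure.map_apply_of_aemeasurable (aemeasurable_quantile'_prod P Q)
    (measurableSet_Ioi.prod measurableSet_Ioi), mk_preimage_prod,
    unif01_congr (t := Ioi (max (cdf' P s) (cdf' Q t))), hanti.map_max,
    ← unif01_preimage_quantile'_Ioi, ← unif01_preimage_quantile'_Ioi,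
    ← Measure.map_apply_of_aemeasurable (aemeasurable_quantile' P) measurableSet_Ioi,
    ← Measure.map_apply_of_aemeasurable (aemeasurable_quantile' Q) measurableSet_Ioi,
    unif01_map_quantile', unif01_map_quantile']
  ext u
  simp only [mem_inter_iff, mem_preimage, mem_Ioi, max_lt_iff]
  exact and_congr_left fun hu => and_congr (lt_quantile'_iff P hu s) (lt_quantile'_iff Q hu t)

end QuantileCoupling

/-- Since `x * y = ∫∫ hoeffdingKernel x s * hoeffdingKernel y t ds dt`, this kernel turns the
cross moment of a coupling into an integral of its quadrant probabilities. -/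
noncomputable def hoeffdingKernel (x t : ℝ) : ℝ :=
  (if t < x then 1 else 0) - (if t < 0 then 1 else 0)

lemma measurable_hoeffdingKernel : Measurable (Function.uncurry hoeffdingKernel) :=
  (Measurable.ite (measurableSet_lt measurable_snd measurable_fst) measurable_const
    measurable_const).sub
  (Measurable.ite (measurableSet_lt measurable_snd measurable_const) measurable_const
    measurable_const)

lemma hoeffdingKernel_eq_indicator (x : ℝ) :
    hoeffdingKernel x = (Ico 0 x).indicator 1 - (Ico x 0).indicator 1 := by
  ext t
  simp only [hoeffdingKernel, Pi.sub_apply, indicator, mem_Ico, Pi.one_apply]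
  (split_ifs <;> norm_num) <;> grind

lemma norm_hoeffdingKernel (x : ℝ) :
    (fun t => ‖hoeffdingKernel x t‖) = (Ico 0 x).indicator 1 + (Ico x 0).indicator 1 := by
  ext t
  simp only [hoeffdingKernel, Pi.add_apply, indicator, mem_Ico, Pi.one_apply]
  (split_ifs <;> norm_num) <;> grind

lemma integrable_indicator_one_Ico (a b : ℝ) : Integrable ((Ico a b).indicator (1 : ℝ → ℝ)) :=
  (integrable_indicator_iff measurableSet_Ico).2 (integrableOn_const measure_Ico_lt_top.ne)

lemma integrable_hoeffdingKernel (x : ℝ) : Integrable (hoeffdingKernel x) := by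
  rw [hoeffdingKernel_eq_indicator]
  exact (integrable_indicator_one_Ico 0 x).sub (integrable_indicator_one_Ico x 0)

lemma integral_hoeffdingKernel (x : ℝ) : ∫ t, hoeffdingKernel x t = x := by
  rw [hoeffdingKernel_eq_indicator,
    integral_sub' (integrable_indicator_one_Ico 0 x) (integrable_indicator_one_Ico x 0),
    integral_indicator_one measurableSet_Ico, integral_indicator_one measurableSet_Ico,
    Real.volume_real_Ico, Real.volume_real_Ico, sub_zero, zero_sub,
    max_zero_sub_max_neg_zero_eq_self]

lemma integral_norm_hoeffdingKernel (x : ℝ) : ∫ t, ‖hoeffdingKernel x t‖ = |x| := by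
  rw [norm_hoeffdingKernel,
    integral_add' (integrable_indicator_one_Ico 0 x) (integrable_indicator_one_Ico x 0),
    integral_indicator_one measurableSet_Ico, integral_indicator_one measurableSet_Ico,
    Real.volume_real_Ico, Real.volume_real_Ico, sub_zero, zero_sub,
    max_zero_add_max_neg_zero_eq_abs_self]

section Hoeffding

variable {P Q : Measure ℝ} {γ : Measure (ℝ × ℝ)}

lemma integrable_hoeffdingKernel_mul_hoeffdingKernel [SFinite γ] (hx : MemLp Prod.fst 2 γ)
    (hy : MemLp Prod.snd 2 γ) :
    Integrable (fun q : (ℝ × ℝ) × (ℝ × ℝ) =>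
      hoeffdingKernel q.1.1 q.2.1 * hoeffdingKernel q.1.2 q.2.2) (γ.prod (volume.prod volume)) := by
  have hmeas : Measurable fun q : (ℝ × ℝ) × (ℝ × ℝ) =>
      hoeffdingKernel q.1.1 q.2.1 * hoeffdingKernel q.1.2 q.2.2 :=
    (measurable_hoeffdingKernel.comp (measurable_fst.fst.prodMk measurable_snd.fst)).mul
      (measurable_hoeffdingKernel.comp (measurable_fst.snd.prodMk measurable_snd.snd))
  refine (integrable_prod_iff hmeas.aestronglyMeasurable).2 ⟨ae_of_all _ fun z =>
    (integrable_hoeffdingKernel z.1).mul_prod (integrable_hoeffdingKernel z.2), ?_⟩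
  refine (hx.integrable_mul hy).norm.congr (ae_of_all _ fun z => ?_)
  simp only [norm_mul, Pi.mul_apply]
  rw [integral_prod_mul (fun s => ‖hoeffdingKernel z.1 s‖) (fun t => ‖hoeffdingKernel z.2 t‖),
    integral_norm_hoeffdingKernel, integral_norm_hoeffdingKernel, Real.norm_eq_abs,
    Real.norm_eq_abs]

lemma integral_fst_mul_snd_eq_integral_hoeffdingKernel [SFinite γ] (hx : MemLp Prod.fst 2 γ)
    (hy : MemLp Prod.snd 2 γ) :
    ∫ z, z.1 * z.2 ∂γ = ∫ p : ℝ × ℝ,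
      ∫ z, hoeffdingKernel z.1 p.1 * hoeffdingKernel z.2 p.2 ∂γ ∂(volume.prod volume) := by
  have hrep (z : ℝ × ℝ) : z.1 * z.2 =
      ∫ p : ℝ × ℝ, hoeffdingKernel z.1 p.1 * hoeffdingKernel z.2 p.2 ∂(volume.prod volume) := by
    rw [integral_prod_mul (hoeffdingKernel z.1) (hoeffdingKernel z.2), integral_hoeffdingKernel,
      integral_hoeffdingKernel]
  simp_rw [hrep]
  exact integral_integral_swap (integrable_hoeffdingKernel_mul_hoeffdingKernel hx hy)

lemma integral_hoeffdingKernel_mul_hoeffdingKernel [IsFiniteMeasure γ] (h₁ : γ.map Prod.fst = P)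
    (h₂ : γ.map Prod.snd = Q) (s t : ℝ) :
    ∫ z, hoeffdingKernel z.1 s * hoeffdingKernel z.2 t ∂γ =
      γ.real (Ioi s ×ˢ Ioi t) - (Iio 0).indicator 1 t * P.real (Ioi s)
        - (Iio 0).indicator 1 s * Q.real (Ioi t)
        + (Iio 0).indicator 1 s * (Iio 0).indicator 1 t * P.real univ := by
  set c : ℝ := (Iio 0).indicator 1 s
  set d : ℝ := (Iio 0).indicator 1 t
  have hR : MeasurableSet (Ioi s ×ˢ Ioi t) := measurableSet_Ioi.prod measurableSet_Ioi
  have hA : MeasurableSet (Prod.fst ⁻¹' Ioi s : Set (ℝ × ℝ)) := measurable_fst measurableSet_Ioi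
  have hB : MeasurableSet (Prod.snd ⁻¹' Ioi t : Set (ℝ × ℝ)) := measurable_snd measurableSet_Ioi
  have hpt : (fun z : ℝ × ℝ => hoeffdingKernel z.1 s * hoeffdingKernel z.2 t) =
      (Ioi s ×ˢ Ioi t).indicator 1 - d • (Prod.fst ⁻¹' Ioi s).indicator 1
        - c • (Prod.snd ⁻¹' Ioi t).indicator 1 + fun _ => c * d := by
    ext z
    simp only [hoeffdingKernel, c, d, indicator, mem_prod, mem_preimage, mem_Ioi, mem_Iio,
      Pi.add_apply, Pi.sub_apply, Pi.smul_apply, Pi.one_apply, smul_eq_mul]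
    split_ifs <;> simp_all
  have hind {S : Set (ℝ × ℝ)} (hS : MeasurableSet S) :
      Integrable (S.indicator (1 : ℝ × ℝ → ℝ)) γ :=
    (integrable_const (1 : ℝ)).indicator hS
  have iR := hind hR
  have iA := (hind hA).smul d
  have iB := (hind hB).smul c
  rw [hpt, integral_add' ((iR.sub iA).sub iB) (integrable_const _), integral_sub' (iR.sub iA) iB,
    integral_sub' iR iA]
  simp only [Pi.smul_apply, smul_eq_mul, integral_const_mul]
  rw [integral_indicator_one hR, integral_indicator_one hA, integral_indicator_one hB,
    integral_const, ← h₁, ← h₂, map_measureReal_apply measurable_fst measurableSet_Ioi,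
    map_measureReal_apply measurable_snd measurableSet_Ioi,
    map_measureReal_apply measurable_fst .univ]
  simp only [smul_eq_mul, preimage_univ]
  ring

lemma integral_fst_mul_snd_le_of_forall_Ioi_prod_le {γ' : Measure (ℝ × ℝ)} [IsFiniteMeasure γ]
    [IsFiniteMeasure γ'] (hP : MemLp id 2 P) (hQ : MemLp id 2 Q) (h₁ : γ.map Prod.fst = P)
    (h₂ : γ.map Prod.snd = Q) (h₁' : γ'.map Prod.fst = P) (h₂' : γ'.map Prod.snd = Q)
    (hle : ∀ s t, γ (Ioi s ×ˢ Ioi t) ≤ γ' (Ioi s ×ˢ Ioi t)) :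
    ∫ z, z.1 * z.2 ∂γ ≤ ∫ z, z.1 * z.2 ∂γ' := by
  have hx := memLp_of_map_eq measurable_fst.aemeasurable h₁ hP
  have hy := memLp_of_map_eq measurable_snd.aemeasurable h₂ hQ
  have hx' := memLp_of_map_eq measurable_fst.aemeasurable h₁' hP
  have hy' := memLp_of_map_eq measurable_snd.aemeasurable h₂' hQ
  rw [integral_fst_mul_snd_eq_integral_hoeffdingKernel hx hy,
    integral_fst_mul_snd_eq_integral_hoeffdingKernel hx' hy']
  refine integral_mono (integrable_hoeffdingKernel_mul_hoeffdingKernel hx hy).integral_prod_right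
    (integrable_hoeffdingKernel_mul_hoeffdingKernel hx' hy').integral_prod_right fun p => ?_
  rw [integral_hoeffdingKernel_mul_hoeffdingKernel h₁ h₂,
    integral_hoeffdingKernel_mul_hoeffdingKernel h₁' h₂']
  gcongr ?_ - _ - _ + _
  exact ENNReal.toReal_mono (measure_ne_top _ _) (hle p.1 p.2)

theorem integral_fst_mul_snd_le_quantileCoupling [IsProbabilityMeasure P]
    [IsProbabilityMeasure Q] (hP : MemLp id 2 P) (hQ : MemLp id 2 Q) (h₁ : γ.map Prod.fst = P)
    (h₂ : γ.map Prod.snd = Q) :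
    ∫ z, z.1 * z.2 ∂γ ≤ ∫ z, z.1 * z.2 ∂quantileCoupling P Q := by
  have := isProbabilityMeasure_of_map_eq h₁
  refine integral_fst_mul_snd_le_of_forall_Ioi_prod_le hP hQ h₁ h₂ (map_fst_quantileCoupling P Q)
    (map_snd_quantileCoupling P Q) fun s t => ?_
  rw [quantileCoupling_Ioi_prod_Ioi]
  exact measure_prod_le_min h₁ h₂ measurableSet_Ioi measurableSet_Ioi

end Hoeffding

lemma W2sq_le_integral_sub_sq {α : Type*} [MeasurableSpace α] {ρ : Measure α} {f g : α → ℝ}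
    {P Q : Measure ℝ} (hf : AEMeasurable f ρ) (hg : AEMeasurable g ρ) (hP : ρ.map f = P)
    (hQ : ρ.map g = Q) : W2sq P Q ≤ ∫ x, (f x - g x) ^ 2 ∂ρ := by
  refine csInf_le ⟨0, ?_⟩ ⟨ρ.map fun x => (f x, g x), ?_, ?_, ?_⟩
  · rintro c ⟨γ, -, -, rfl⟩
    exact integral_nonneg fun z => sq_nonneg _
  · rwa [AEMeasurable.map_map_of_aemeasurable measurable_fst.aemeasurable (hf.prodMk hg)]
  · rwa [AEMeasurable.map_map_of_aemeasurable measurable_snd.aemeasurable (hf.prodMk hg)]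
  · exact (integral_map (f := fun z : ℝ × ℝ => (z.1 - z.2) ^ 2) (hf.prodMk hg)
      ((measurable_fst.sub measurable_snd).pow_const 2).aestronglyMeasurable).symm

lemma integral_sub_sq_eq {P Q : Measure ℝ} {γ : Measure (ℝ × ℝ)} (hP : MemLp id 2 P)
    (hQ : MemLp id 2 Q) (h₁ : γ.map Prod.fst = P) (h₂ : γ.map Prod.snd = Q) :
    ∫ z, (z.1 - z.2) ^ 2 ∂γ = ∫ x, x ^ 2 ∂P + ∫ y, y ^ 2 ∂Q - 2 * ∫ z, z.1 * z.2 ∂γ := by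
  have hx := memLp_of_map_eq measurable_fst.aemeasurable h₁ hP
  have hy := memLp_of_map_eq measurable_snd.aemeasurable h₂ hQ
  have hsq : (fun z : ℝ × ℝ => (z.1 - z.2) ^ 2) =
      fun z => z.1 ^ 2 + z.2 ^ 2 - 2 * (z.1 * z.2) := by
    ext z; ring
  have hsum : Integrable (fun z : ℝ × ℝ => z.1 ^ 2 + z.2 ^ 2) γ :=
    hx.integrable_sq.add hy.integrable_sq
  have hprod : Integrable (fun z : ℝ × ℝ => 2 * (z.1 * z.2)) γ :=
    (hx.integrable_mul hy).const_mul 2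
  rw [hsq, integral_sub hsum hprod, integral_add hx.integrable_sq hy.integrable_sq,
    integral_const_mul, integral_sq_of_map_eq measurable_fst.aemeasurable h₁,
    integral_sq_of_map_eq measurable_snd.aemeasurable h₂]

theorem W2sq_eq_integral_quantile'_sub_sq (P Q : Measure ℝ) [IsProbabilityMeasure P]
    [IsProbabilityMeasure Q] (hP : MemLp id 2 P) (hQ : MemLp id 2 Q) :
    W2sq P Q = ∫ u, (quantile' P u - quantile' Q u) ^ 2 ∂unif01 := by
  have hcost : ∫ u, (quantile' P u - quantile' Q u) ^ 2 ∂unif01 =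
      ∫ z, (z.1 - z.2) ^ 2 ∂quantileCoupling P Q :=
    (integral_map (f := fun z : ℝ × ℝ => (z.1 - z.2) ^ 2) (aemeasurable_quantile'_prod P Q)
      ((measurable_fst.sub measurable_snd).pow_const 2).aestronglyMeasurable).symm
  refine le_antisymm (W2sq_le_integral_sub_sq (aemeasurable_quantile' P)
    (aemeasurable_quantile' Q) (unif01_map_quantile' P) (unif01_map_quantile' Q)) ?_
  refine le_csInf ⟨_, _, map_fst_quantileCoupling P Q, map_snd_quantileCoupling P Q, rfl⟩ ?_
  rintro c ⟨γ, h₁, h₂, rfl⟩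
  rw [hcost, integral_sub_sq_eq hP hQ h₁ h₂,
    integral_sub_sq_eq hP hQ (map_fst_quantileCoupling P Q) (map_snd_quantileCoupling P Q)]
  linarith [integral_fst_mul_snd_le_quantileCoupling hP hQ h₁ h₂]

section WeightedMean

variable {ι : Type*} [Fintype ι]

lemma sum_mul_sub_weightedMean_sq_eq (π : ι → ℝ) (hπ : ∑ s, π s = 1) (a : ι → ℝ) :
    ∑ s, π s * (a s - ∑ t, π t * a t) ^ 2 =
      ∑ s, π s * a s ^ 2 - ∑ s, ∑ t, π s * π t * (a s * a t) := by
  set m := ∑ t, π t * a t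
  have hm : ∑ s, ∑ t, π s * π t * (a s * a t) = m ^ 2 := by
    simp_rw [sq, m, Finset.sum_mul_sum]
    exact Finset.sum_congr rfl fun s _ => Finset.sum_congr rfl fun t _ => by ring
  calc ∑ s, π s * (a s - m) ^ 2
      = ∑ s, π s * a s ^ 2 - ∑ s, 2 * m * (π s * a s) + ∑ s, m ^ 2 * π s := by
        rw [← Finset.sum_sub_distrib, ← Finset.sum_add_distrib]
        exact Finset.sum_congr rfl fun s _ => by ring
    _ = _ := by rw [← Finset.mul_sum, ← Finset.mul_sum, hm, hπ]; ring

lemma sum_mul_sub_weightedMean_sq_le (π : ι → ℝ) (hπ : ∑ s, π s = 1) (a : ι → ℝ) (y : ℝ) :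
    ∑ s, π s * (a s - ∑ t, π t * a t) ^ 2 ≤ ∑ s, π s * (a s - y) ^ 2 := by
  set m := ∑ t, π t * a t
  have hvar : ∑ s, π s * (a s - y) ^ 2 = ∑ s, π s * (a s - m) ^ 2 + (m - y) ^ 2 := by
    calc ∑ s, π s * (a s - y) ^ 2
        = ∑ s, π s * (a s - m) ^ 2 + ∑ s, 2 * (m - y) * (π s * a s)
            - ∑ s, (m - y) * (m + y) * π s := by
          rw [← Finset.sum_add_distrib, ← Finset.sum_sub_distrib]
          exact Finset.sum_congr rfl fun s _ => by ring
      _ = _ := by rw [← Finset.mul_sum, ← Finset.mul_sum, hπ]; ring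
  linarith [sq_nonneg (m - y)]

variable {α : Type*} [MeasurableSpace α] {ρ : Measure α}

lemma sum_mul_integral_eq_integral_sum (π : ι → ℝ) {f : ι → α → ℝ}
    (hf : ∀ s, Integrable (f s) ρ) :
    ∑ s, π s * ∫ x, f s x ∂ρ = ∫ x, ∑ s, π s * f s x ∂ρ := by
  rw [integral_finsetSum _ fun s _ => (hf s).const_mul (π s)]
  simp_rw [integral_const_mul]

lemma sum_mul_integral_sub_weightedMean_sq_le (π : ι → ℝ) (hπ : ∑ s, π s = 1)
    {f : ι → α → ℝ} {g : α → ℝ} (hf : ∀ s, MemLp (f s) 2 ρ) (hg : MemLp g 2 ρ) :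
    ∑ s, π s * ∫ x, (f s x - ∑ t, π t * f t x) ^ 2 ∂ρ ≤
      ∑ s, π s * ∫ x, (f s x - g x) ^ 2 ∂ρ := by
  have hmean : MemLp (fun x => ∑ t, π t * f t x) 2 ρ :=
    memLp_finsetSum _ fun t _ => (hf t).const_mul (π t)
  have hdev : ∀ s, Integrable (fun x => (f s x - ∑ t, π t * f t x) ^ 2) ρ :=
    fun s => ((hf s).sub hmean).integrable_sq
  have hdev' : ∀ s, Integrable (fun x => (f s x - g x) ^ 2) ρ :=
    fun s => ((hf s).sub hg).integrable_sq
  rw [sum_mul_integral_eq_integral_sum π hdev, sum_mul_integral_eq_integral_sum π hdev']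
  refine integral_mono ?_ ?_ fun x => sum_mul_sub_weightedMean_sq_le π hπ (f · x) (g x)
  · exact integrable_finsetSum _ fun s _ => (hdev s).const_mul (π s)
  · exact integrable_finsetSum _ fun s _ => (hdev' s).const_mul (π s)

end WeightedMean

section Multimarginal

variable {ι : Type*} [Fintype ι]

noncomputable def multimarginalCost (π : ι → ℝ) (γ : Measure (ι → ℝ)) : ℝ :=
  ∑ s, π s * ∫ z, (z s - ∑ t, π t * z t) ^ 2 ∂γ

lemma multimarginalCost_eq {π : ι → ℝ} (hπ : ∑ s, π s = 1) {γ : Measure (ι → ℝ)}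
    (hz : ∀ s, MemLp (fun z => z s) 2 γ) :
    multimarginalCost π γ =
      ∑ s, π s * ∫ z, z s ^ 2 ∂γ - ∑ s, ∑ t, π s * π t * ∫ z, z s * z t ∂γ := by
  have hmean : MemLp (fun z : ι → ℝ => ∑ t, π t * z t) 2 γ :=
    memLp_finsetSum _ fun t _ => (hz t).const_mul (π t)
  have hmul : ∀ s t, Integrable (fun z : ι → ℝ => z s * z t) γ :=
    fun s t => (hz s).integrable_mul (hz t)
  have hdouble : Integrable (fun z : ι → ℝ => ∑ s, ∑ t, π s * π t * (z s * z t)) γ :=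
    integrable_finsetSum _ fun s _ => integrable_finsetSum _ fun t _ => (hmul s t).const_mul _
  have hdev : ∀ s, Integrable (fun z : ι → ℝ => (z s - ∑ t, π t * z t) ^ 2) γ :=
    fun s => ((hz s).sub hmean).integrable_sq
  rw [multimarginalCost, sum_mul_integral_eq_integral_sum π hdev]
  simp_rw [sum_mul_sub_weightedMean_sq_eq π hπ]
  rw [integral_sub (integrable_finsetSum _ fun s _ => (hz s).integrable_sq.const_mul (π s))
      hdouble, ← sum_mul_integral_eq_integral_sum π fun s => (hz s).integrable_sq,
    integral_finsetSum _ fun s _ => integrable_finsetSum _ fun t _ => (hmul s t).const_mul _]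
  simp_rw [integral_finsetSum _ fun t _ => (hmul _ t).const_mul _, integral_const_mul]

lemma multimarginalCost_le_of_integral_mul_le {π : ι → ℝ} (hπ0 : ∀ s, 0 ≤ π s)
    (hπ : ∑ s, π s = 1) {μ : ι → Measure ℝ} (hμ : ∀ s, MemLp id 2 (μ s))
    {γ γ' : Measure (ι → ℝ)} (hγ : ∀ s, γ.map (fun z => z s) = μ s)
    (hγ' : ∀ s, γ'.map (fun z => z s) = μ s)
    (hle : ∀ s t, ∫ z, z s * z t ∂γ ≤ ∫ z, z s * z t ∂γ') :
    multimarginalCost π γ' ≤ multimarginalCost π γ := by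
  have hz {γ : Measure (ι → ℝ)} (hγ : ∀ s, γ.map (fun z => z s) = μ s) s :=
    memLp_of_map_eq (measurable_pi_apply s).aemeasurable (hγ s) (hμ s)
  rw [multimarginalCost_eq hπ (hz hγ), multimarginalCost_eq hπ (hz hγ')]
  have hmom (s : ι) : ∫ z, z s ^ 2 ∂γ' = ∫ z, z s ^ 2 ∂γ := by
    rw [integral_sq_of_map_eq (measurable_pi_apply s).aemeasurable (hγ s),
      integral_sq_of_map_eq (measurable_pi_apply s).aemeasurable (hγ' s)]
  simp_rw [hmom]
  refine sub_le_sub_left (Finset.sum_le_sum fun s _ => Finset.sum_le_sum fun t _ => ?_) _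
  exact mul_le_mul_of_nonneg_left (hle s t) (mul_nonneg (hπ0 s) (hπ0 t))

noncomputable def quantileCouplingPi (μ : ι → Measure ℝ) : Measure (ι → ℝ) :=
  unif01.map fun u s => quantile' (μ s) u

variable (μ : ι → Measure ℝ) [∀ s, IsProbabilityMeasure (μ s)]

lemma aemeasurable_quantile'_pi : AEMeasurable (fun u s => quantile' (μ s) u) unif01 :=
  aemeasurable_pi_lambda _ fun s => aemeasurable_quantile' (μ s)

lemma map_quantileCouplingPi {β : Type*} [MeasurableSpace β] {f : (ι → ℝ) → β}
    (hf : Measurable f) :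
    (quantileCouplingPi μ).map f = unif01.map fun u => f fun s => quantile' (μ s) u :=
  AEMeasurable.map_map_of_aemeasurable hf.aemeasurable (aemeasurable_quantile'_pi μ)

lemma map_eval_quantileCouplingPi (s : ι) :
    (quantileCouplingPi μ).map (fun z => z s) = μ s := by
  rw [map_quantileCouplingPi μ (measurable_pi_apply s)]
  exact unif01_map_quantile' (μ s)

lemma map_pair_quantileCouplingPi (s t : ι) :
    (quantileCouplingPi μ).map (fun z => (z s, z t)) = quantileCoupling (μ s) (μ t) :=
  map_quantileCouplingPi μ ((measurable_pi_apply s).prodMk (measurable_pi_apply t))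

lemma integral_quantileCouplingPi {f : (ι → ℝ) → ℝ} (hf : Measurable f) :
    ∫ z, f z ∂quantileCouplingPi μ = ∫ u, f (fun s => quantile' (μ s) u) ∂unif01 :=
  integral_map (aemeasurable_quantile'_pi μ) hf.aestronglyMeasurable

lemma integral_mul_le_quantileCouplingPi (hμ : ∀ s, MemLp id 2 (μ s)) {γ : Measure (ι → ℝ)}
    (hγ : ∀ s, γ.map (fun z => z s) = μ s) (s t : ι) :
    ∫ z, z s * z t ∂γ ≤ ∫ z, z s * z t ∂quantileCouplingPi μ := by
  have hpair : Measurable fun z : ι → ℝ => (z s, z t) :=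
    (measurable_pi_apply s).prodMk (measurable_pi_apply t)
  have hmul {ρ : Measure (ℝ × ℝ)} : AEStronglyMeasurable (fun p : ℝ × ℝ => p.1 * p.2) ρ :=
    (measurable_fst.mul measurable_snd).aestronglyMeasurable
  rw [← integral_map (f := fun p : ℝ × ℝ => p.1 * p.2) hpair.aemeasurable hmul,
    ← integral_map (f := fun p : ℝ × ℝ => p.1 * p.2) hpair.aemeasurable hmul,
    map_pair_quantileCouplingPi]
  refine integral_fst_mul_snd_le_quantileCoupling (hμ s) (hμ t) ?_ ?_
  · rw [Measure.map_map measurable_fst hpair]; exact hγ s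
  · rw [Measure.map_map measurable_snd hpair]; exact hγ t

variable {π : ι → ℝ}

lemma multimarginalCost_quantileCouplingPi_le (hπ0 : ∀ s, 0 ≤ π s) (hπ : ∑ s, π s = 1)
    (hμ : ∀ s, MemLp id 2 (μ s)) {γ : Measure (ι → ℝ)} (hγ : ∀ s, γ.map (fun z => z s) = μ s) :
    multimarginalCost π (quantileCouplingPi μ) ≤ multimarginalCost π γ :=
  multimarginalCost_le_of_integral_mul_le hπ0 hπ hμ hγ (map_eval_quantileCouplingPi μ)
    (integral_mul_le_quantileCouplingPi μ hμ hγ)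

lemma multimarginalCost_quantileCouplingPi :
    multimarginalCost π (quantileCouplingPi μ) =
      ∑ s, π s * ∫ u, (quantile' (μ s) u - ∑ t, π t * quantile' (μ t) u) ^ 2 ∂unif01 :=
  Finset.sum_congr rfl fun s _ =>
    congrArg (π s * ·) (integral_quantileCouplingPi μ (by fun_prop))

lemma multimarginalCost_quantileCouplingPi_le_sum_W2sq (hπ : ∑ s, π s = 1)
    (hμ : ∀ s, MemLp id 2 (μ s)) {ν : Measure ℝ} [IsProbabilityMeasure ν] (hν : MemLp id 2 ν) :
    multimarginalCost π (quantileCouplingPi μ) ≤ ∑ s, π s * W2sq (μ s) ν := by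
  simp_rw [multimarginalCost_quantileCouplingPi, W2sq_eq_integral_quantile'_sub_sq _ _ (hμ _) hν]
  exact sum_mul_integral_sub_weightedMean_sq_le π hπ (fun s => memLp_quantile' (μ s) (hμ s))
    (memLp_quantile' ν hν)

lemma aemeasurable_sum_mul_quantile' :
    AEMeasurable (fun u => ∑ t, π t * quantile' (μ t) u) unif01 :=
  Finset.aemeasurable_fun_sum _ fun t _ => (aemeasurable_quantile' (μ t)).const_mul (π t)

lemma sum_W2sq_map_sum_mul_quantile'_le (hπ0 : ∀ s, 0 ≤ π s) :
    ∑ s, π s * W2sq (μ s) (unif01.map fun u => ∑ t, π t * quantile' (μ t) u) ≤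
      multimarginalCost π (quantileCouplingPi μ) := by
  rw [multimarginalCost_quantileCouplingPi]
  refine Finset.sum_le_sum fun s _ => mul_le_mul_of_nonneg_left ?_ (hπ0 s)
  exact W2sq_le_integral_sub_sq (aemeasurable_quantile' _) (aemeasurable_sum_mul_quantile' μ)
    (unif01_map_quantile' _) rfl

theorem isLeast_sum_W2sq (hπ0 : ∀ s, 0 ≤ π s) (hπ : ∑ s, π s = 1)
    (hμ : ∀ s, MemLp id 2 (μ s)) :
    IsLeast {c | ∃ ν : Measure ℝ, IsProbabilityMeasure ν ∧ MemLp id 2 ν ∧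
        c = ∑ s, π s * W2sq (μ s) ν} (multimarginalCost π (quantileCouplingPi μ)) := by
  set νbar := unif01.map fun u => ∑ t, π t * quantile' (μ t) u
  have hνbar : IsProbabilityMeasure νbar :=
    Measure.isProbabilityMeasure_map (aemeasurable_sum_mul_quantile' μ)
  have hνbar2 : MemLp id 2 νbar :=
    (memLp_map_measure_iff aestronglyMeasurable_id (aemeasurable_sum_mul_quantile' μ)).2
      (memLp_finsetSum _ fun t _ => (memLp_quantile' (μ t) (hμ t)).const_mul (π t))
  refine ⟨⟨νbar, hνbar, hνbar2, le_antisymm ?_ (sum_W2sq_map_sum_mul_quantile'_le μ hπ0)⟩, ?_⟩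
  · exact multimarginalCost_quantileCouplingPi_le_sum_W2sq μ hπ hμ hνbar2
  · rintro c ⟨ν, hν, hν2, rfl⟩
    exact multimarginalCost_quantileCouplingPi_le_sum_W2sq μ hπ hμ hν2

end Multimarginal

theorem multimarginal_formulation_general
    (k : ℕ)
    (μ : Fin k → Measure ℝ) (hμ : ∀ s, IsProbabilityMeasure (μ s))
    (hμ2 : ∀ s, MemLp id 2 (μ s))
    (π : Fin k → ℝ) (hπpos : ∀ s, 0 < π s) (hπsum : ∑ s, π s = 1)
    (b : (Fin k → ℝ) → ℝ) (hb : ∀ z, b z = ∑ s, π s * z s)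
    (γstar : Measure (Fin k → ℝ))
    (hγstar : γstar = unif01.map (fun u s => quantile' (μ s) u))
    (νbar : Measure ℝ)
    (hνbar : νbar = unif01.map (fun u => ∑ s, π s * quantile' (μ s) u)) :
    (∀ s, γstar.map (fun z => z s) = μ s) ∧
    (∀ γ : Measure (Fin k → ℝ), (∀ s, γ.map (fun z => z s) = μ s) →
      ∑ s, π s * ∫ z, (z s - b z) ^ 2 ∂γstar
        ≤ ∑ s, π s * ∫ z, (z s - b z) ^ 2 ∂γ) ∧
    γstar.map b = νbar ∧
    (∑ s, π s * ∫ z, (z s - b z) ^ 2 ∂γstar)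
      = sInf { c : ℝ | ∃ ν : Measure ℝ, IsProbabilityMeasure ν ∧ MemLp id 2 ν ∧
          c = ∑ s, π s * W2sq (μ s) ν } := by
  obtain rfl : b = fun z => ∑ s, π s * z s := funext hb
  subst hγstar hνbar
  have hπ0 : ∀ s, 0 ≤ π s := fun s => (hπpos s).le
  exact ⟨map_eval_quantileCouplingPi μ,
    fun γ hγ => multimarginalCost_quantileCouplingPi_le μ hπ0 hπsum hμ2 hγ,
    map_quantileCouplingPi μ (by fun_prop),
    (isLeast_sum_W2sq μ hπ0 hπsum hμ2).csInf_eq.symm⟩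

/-- **Multimarginal formulation of the barycenter** (equations (9)–(10)). The pushforward
`γ*` of `Unif(0,1)` under `u ↦ (F_{μ_1}⁻¹(u),…,F_{μ_k}⁻¹(u))`: (i) has marginals
`μ_1,…,μ_k`; (ii) minimizes `γ ↦ Σ_s π_s ∫ |z_s − b(z)|² dγ(z)` over measures with these
marginals, where `b(z) = Σ_s π_s z_s`; (iii) satisfies `b_#γ* = ν̄`; and (iv) its
multimarginal cost equals `inf_ν Σ_s π_s W₂²(μ_s, ν)`. -/
theorem multimarginal_formulation
    (k : ℕ) (hk : 0 < k)
    (μ : Fin k → Measure ℝ) (hμ : ∀ s, IsProbabilityMeasure (μ s))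
    (hμ2 : ∀ s, MemLp id 2 (μ s))
    (π : Fin k → ℝ) (hπpos : ∀ s, 0 < π s) (hπsum : ∑ s, π s = 1)
    (b : (Fin k → ℝ) → ℝ) (hb : ∀ z, b z = ∑ s, π s * z s)
    (γstar : Measure (Fin k → ℝ))
    (hγstar : γstar = unif01.map (fun u s => quantile' (μ s) u))
    (νbar : Measure ℝ)
    (hνbar : νbar = unif01.map (fun u => ∑ s, π s * quantile' (μ s) u)) :
    (∀ s, γstar.map (fun z => z s) = μ s) ∧
    (∀ γ : Measure (Fin k → ℝ), (∀ s, γ.map (fun z => z s) = μ s) →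
      ∑ s, π s * ∫ z, (z s - b z) ^ 2 ∂γstar
        ≤ ∑ s, π s * ∫ z, (z s - b z) ^ 2 ∂γ) ∧
    γstar.map b = νbar ∧
    (∑ s, π s * ∫ z, (z s - b z) ^ 2 ∂γstar)
      = sInf { c : ℝ | ∃ ν : Measure ℝ, IsProbabilityMeasure ν ∧ MemLp id 2 ν ∧
          c = ∑ s, π s * W2sq (μ s) ν } :=
  multimarginal_formulation_general k μ hμ hμ2 π hπpos hπsum b hb γstar hγstar νbar hνbar
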